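/- Suppose nonnegative reals x, y, z, R, B, p with 0 ≤ p ≤ 1 satisfy the system: x + y + z = R; p·x + (1−p)·y = z; and B + p(R−B) + (1−p)(R−B)·(y/R) = R − x, with R > 0 and B ≤ R. Then R − x ≤ 2B + p(R−B) + p²(R−B). -/
import Mathlib


/-- Star graph system of equations: if `x + y + z = R`, `p*x + (1-p)*y = z`, and
`B + p*(R-B) + (1-p)*(R-B)*(y/R) = R - x`, with everything nonnegative, `R > 0`,
`B ≤ R` and `0 ≤ p ≤ 1`, then `R - x ≤ 2*B + p*(R-B) + p^2*(R-B)`. -/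
theorem stmt_8 (x y z R B p : ℝ)
    (hx : 0 ≤ x) (hy : 0 ≤ y) (hz : 0 ≤ z) (hB : 0 ≤ B)
    (hp0 : 0 ≤ p) (hp1 : p ≤ 1) (hR : 0 < R) (hBR : B ≤ R)
    (h1 : x + y + z = R)
    (h2 : p * x + (1 - p) * y = z)
    (h3 : B + p * (R - B) + (1 - p) * (R - B) * (y / R) = R - x) :
    R - x ≤ 2*B + p*(R - B) + p^2*(R - B) := by
  have hA : (1 + p) * x + (2 - p) * y = R := by linarith [h1, h2]
  have h3' : (B + p * (R - B)) * R + (1 - p) * (R - B) * y = (R - x) * R := by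
    field_simp at h3
    nlinarith [h3]
  nlinarith [mul_nonneg hp0 hy, mul_nonneg (mul_nonneg hp0 hp0) hy,
    mul_nonneg hB hy, mul_nonneg (sub_nonneg.2 hp1) hy,
    mul_nonneg (sub_nonneg.2 hBR) hy, mul_nonneg hp0 (sub_nonneg.2 hBR),
    mul_nonneg (mul_nonneg hp0 (sub_nonneg.2 hp1)) (sub_nonneg.2 hBR),
    mul_nonneg (mul_nonneg hp0 hp0) (sub_nonneg.2 hBR), sq_nonneg (p - 1), sq_nonneg p, hR.le]
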